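/- Let (φ_t) be a non-elliptic semigroup in the unit disc 𝔻 with total speed v(t) and orthogonal speed v^o(t). If v(t₂) ≥ v(t₁) for some t₂ ≥ t₁ ≥ 0, then v^o(t₂) ≥ v^o(t₁). -/

import Mathlib

open Complex Filter Topology Set MeasureTheory

noncomputable section

/-- The unit disc in the complex plane. -/
def unitDisc : Set ℂ := {z : ℂ | ‖z‖ < 1}

/-- The inverse hyperbolic tangent: `arctanh x = (1/2)·log((1+x)/(1−x))`. -/
def arctanh (x : ℝ) : ℝ := (1 / 2) * Real.log ((1 + x) / (1 - x))

/-- The hyperbolic distance on the unit disc: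
`k_𝔻(z,w) = arctanh |(z−w)/(1−conj(z)·w)|`. -/
def kD (z w : ℂ) : ℝ :=
  arctanh (‖(z - w) / (1 - (starRingEnd ℂ) z * w)‖)

/-- `φ` is a continuous one-parameter semigroup of holomorphic self-maps of the unit disc. -/
structure IsDiscSemigroup (φ : ℝ → ℂ → ℂ) : Prop where
  mapsTo : ∀ t : ℝ, 0 ≤ t → Set.MapsTo (φ t) unitDisc unitDisc
  holo : ∀ t : ℝ, 0 ≤ t → DifferentiableOn ℂ (φ t) unitDisc
  id0 : ∀ z ∈ unitDisc, φ 0 z = z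
  comp : ∀ s t : ℝ, 0 ≤ s → 0 ≤ t → ∀ z ∈ unitDisc, φ (t + s) z = φ t (φ s z)
  cont : ContinuousOn (fun p : ℝ × ℂ => φ p.1 p.2) (Set.Ici 0 ×ˢ unitDisc)

/-- A semigroup in the disc is non-elliptic if it has no fixed point in the disc
for positive times. -/
structure IsNonElliptic (φ : ℝ → ℂ → ℂ) extends IsDiscSemigroup φ : Prop where
  noFixedPoint : ∀ t : ℝ, 0 < t → ∀ z ∈ unitDisc, φ t z ≠ z

/-- `τ` is the Denjoy-Wolff point of the semigroup `φ`: a boundary point to which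
all orbits converge. -/
def IsDenjoyWolff (φ : ℝ → ℂ → ℂ) (τ : ℂ) : Prop :=
  ‖τ‖ = 1 ∧ ∀ z ∈ unitDisc, Tendsto (fun t => φ t z) atTop (𝓝 τ)

/-- `h` is a Koenigs function of the semigroup `φ`: univalent on the disc with
`h(φ_t(z)) = h(z) + it`. -/
def IsKoenigs (φ : ℝ → ℂ → ℂ) (h : ℂ → ℂ) : Prop :=
  DifferentiableOn ℂ h unitDisc ∧ Set.InjOn h unitDisc ∧
    ∀ t : ℝ, 0 ≤ t → ∀ z ∈ unitDisc, h (φ t z) = h z + Complex.I * t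

/-- `p` is the hyperbolic orthogonal projection onto the geodesic `(−1,1)·τ`:
for every `z` in the disc, `p z` lies on the geodesic and minimizes the hyperbolic
distance from `z` to the geodesic. -/
def IsOrthProjection (τ : ℂ) (p : ℂ → ℂ) : Prop :=
  ∀ z ∈ unitDisc,
    (∃ r : ℝ, r ∈ Set.Ioo (-1 : ℝ) 1 ∧ p z = (r : ℂ) * τ) ∧
    ∀ r : ℝ, r ∈ Set.Ioo (-1 : ℝ) 1 → kD z (p z) ≤ kD z ((r : ℂ) * τ)

/-- The total speed `v(t) = k_𝔻(0, φ_t(0))` of a semigroup. -/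
def totalSpeed (φ : ℝ → ℂ → ℂ) (t : ℝ) : ℝ := kD 0 (φ t 0)

/-- The orthogonal speed `v^o(t) = k_𝔻(0, π(φ_t(0)))` of a semigroup, relative to the
orthogonal projection `p` onto the geodesic `(−1,1)·τ`. -/
def orthSpeed (φ : ℝ → ℂ → ℂ) (p : ℂ → ℂ) (t : ℝ) : ℝ := kD 0 (p (φ t 0))

/-- `δ⁺(t)`: the truncated distance from `z₀ + it` to the part of the complement of `Ω`
lying to the right of the vertical line through `z₀`. -/
def deltaPlus (Ω : Set ℂ) (z₀ : ℂ) (t : ℝ) : ℝ :=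
  min t (sInf {d : ℝ | ∃ w : ℂ, w ∉ Ω ∧ z₀.re ≤ w.re ∧ d = ‖w - (z₀ + Complex.I * t)‖})

/-- `δ⁻(t)`: the truncated distance from `z₀ + it` to the part of the complement of `Ω`
lying to the left of the vertical line through `z₀`. -/
def deltaMinus (Ω : Set ℂ) (z₀ : ℂ) (t : ℝ) : ℝ :=
  min t (sInf {d : ℝ | ∃ w : ℂ, w ∉ Ω ∧ w.re ≤ z₀.re ∧ d = ‖w - (z₀ + Complex.I * t)‖})

/-- `Ω` is quasi-symmetric with respect to vertical axes. -/
def QuasiSymmetric (Ω : Set ℂ) : Prop :=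
  ∃ z₀ ∈ Ω, ∃ K : ℝ, 0 < K ∧ ∀ t : ℝ, 0 ≤ t →
    K⁻¹ * deltaMinus Ω z₀ t ≤ deltaPlus Ω z₀ t ∧ deltaPlus Ω z₀ t ≤ K * deltaMinus Ω z₀ t

/-- `Ω` is starlike with respect to `w₀`: every segment from `w₀` to a point of `Ω`
is contained in `Ω`. -/
def StarlikeWrt (Ω : Set ℂ) (w₀ : ℂ) : Prop :=
  ∀ w ∈ Ω, ∀ s : ℝ, s ∈ Set.Icc (0 : ℝ) 1 → (1 - (s : ℂ)) * w₀ + (s : ℂ) * w ∈ Ω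

/-- The orbit of `0` converges non-tangentially to `τ`:
`limsup_{t→+∞} |τ − φ_t(0)|/(1 − |φ_t(0)|) < +∞`. -/
def ConvergesNonTangentially (φ : ℝ → ℂ → ℂ) (τ : ℂ) : Prop :=
  Filter.limsup (fun t : ℝ =>
    ((‖τ - φ t 0‖ / (1 - ‖φ t 0‖) : ℝ) : EReal)) atTop < ⊤

/-- `f` is eventually non-decreasing. -/
def EventuallyNondecreasing (f : ℝ → ℝ) : Prop :=
  ∃ T : ℝ, ∀ s t : ℝ, T ≤ s → s ≤ t → f s ≤ f t

/-- The Cayley transform from the unit disc to the right half-plane. -/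
def cayley (z : ℂ) : ℂ := (1 + z) / (1 - z)

/-- The inverse Cayley transform, from the right half-plane to the unit disc. -/
def cayleyInv (w : ℂ) : ℂ := (w - 1) / (w + 1)

/-- `Θ_ρ := {iy : y ∈ ℝ, |y| ≥ ρ}`, a subset of the imaginary axis. -/
def Theta (ρ : ℝ) : Set ℂ := {z : ℂ | ∃ y : ℝ, z = Complex.I * (y : ℂ) ∧ ρ ≤ |y|}

/-- `Γ*_t := {iy : |y| ≥ inf_{u ≥ t} ρ_u}`. -/
def GammaStar (ρ : ℝ → ℝ) (t : ℝ) : Set ℂ :=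
  {z : ℂ | ∃ y : ℝ, z = Complex.I * (y : ℂ) ∧ sInf {r : ℝ | ∃ u : ℝ, t ≤ u ∧ r = ρ u} ≤ |y|}

/-- The harmonic measure at `w` (a point of the right half-plane) of a Borel subset `E`
of the imaginary axis, with respect to the right half-plane:
`ω(w,E,ℍ) = (1/π) ∫_{{s : is ∈ E}} Re w/((Re w)² + (Im w − s)²) ds`. -/
def omegaH (w : ℂ) (E : Set ℂ) : ℝ :=
  (1 / Real.pi) *
    ∫ s in {s : ℝ | Complex.I * (s : ℂ) ∈ E}, w.re / (w.re ^ 2 + (w.im - s) ^ 2)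

/-- The Euclidean arclength of the closed arc of the unit circle containing `1`
with endpoints `a` and `conj a` (where `Im a > 0`), namely `2·arg a`. -/
def arcLength (a : ℂ) : ℝ := 2 * Complex.arg a

/-- The harmonic measure at `0` with respect to the unit disc of the closed arc of the
unit circle containing `1` with endpoints `a` and `conj a`: `ℓ(A)/(2π)`. -/
def omegaDiscZero (a : ℂ) : ℝ := arcLength a / (2 * Real.pi)

/-- `Π_α := {z ∈ ℂ : Im z > |Re z|^α}`. -/
def PiDom (α : ℝ) : Set ℂ := {z : ℂ | |z.re| ^ α < z.im}

/-- `W(θ) := {z ≠ 0 : arg z ∈ (π/2 − θ, π/2)}`. -/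
def Wsector (θ : ℝ) : Set ℂ :=
  {z : ℂ | z ≠ 0 ∧ Complex.arg z ∈ Set.Ioo (Real.pi / 2 - θ) (Real.pi / 2)}

/-- `Ξ(α,θ) := ({Re z ≤ 0} ∩ Π_α) ∪ W(θ)`. -/
def Xi (α θ : ℝ) : Set ℂ := ({z : ℂ | z.re ≤ 0} ∩ PiDom α) ∪ Wsector θ

/-!
Write `z t = φ t 0`. Julia's lemma, applied along the semigroup, says that the Poisson kernel
`(1 - ‖z‖²) / ‖τ - z‖²` does not decrease along orbits; at `z = 0` it equals `1`. Julia's lemma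
only needs points `u n → τ` at which the map does not decrease the norm, and the orbit of `0` under
`φ s` supplies them, because `‖φ (n * s) 0‖ → 1` cannot decrease from some index on. The foot `r * τ` of
the hyperbolic perpendicular from `z` to the diameter through `τ` is determined by
`r / (1 + r²) = Re (z̄ τ) / (1 + ‖z‖²) = (1 - ‖τ - z‖² / (1 + ‖z‖²)) / 2`, and the right-hand side
increases when both `‖z‖` and the Poisson kernel do. Hence `0 ≤ r (z t₁) ≤ r (z t₂)`, while the
orthogonal speed is `arctanh |r (z t)|`.
-/

open Metric
open scoped ComplexConjugate

lemma arctanh_eq_artanh {x : ℝ} (hx : x ∈ Icc (-1) 1) : arctanh x = Real.artanh x :=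
  (Real.artanh_eq_half_log hx).symm

lemma arctanh_le_arctanh_iff {x y : ℝ} (hx : x ∈ Ioo (-1) 1) (hy : y ∈ Ioo (-1) 1) :
    arctanh x ≤ arctanh y ↔ x ≤ y := by
  rw [arctanh_eq_artanh (Ioo_subset_Icc_self hx), arctanh_eq_artanh (Ioo_subset_Icc_self hy)]
  exact Real.artanh_le_artanh_iff hx hy

lemma arctanh_lt_arctanh_iff {x y : ℝ} (hx : x ∈ Ioo (-1) 1) (hy : y ∈ Ioo (-1) 1) :
    arctanh x < arctanh y ↔ x < y := by
  rw [arctanh_eq_artanh (Ioo_subset_Icc_self hx), arctanh_eq_artanh (Ioo_subset_Icc_self hy)]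
  exact Real.artanh_lt_artanh_iff hx hy

lemma norm_mem_Ioo_of_norm_lt_one {z : ℂ} (hz : ‖z‖ < 1) : ‖z‖ ∈ Ioo (-1 : ℝ) 1 :=
  ⟨by linarith [norm_nonneg z], hz⟩

lemma unitDisc_eq_ball : unitDisc = ball (0 : ℂ) 1 := by
  ext z
  simp [unitDisc]

lemma kD_zero_left (w : ℂ) : kD 0 w = arctanh ‖w‖ := by
  simp [kD]

/-- The involutive automorphism of the disc exchanging `a` and `0`. -/
def mobius (a z : ℂ) : ℂ := (a - z) / (1 - conj a * z)

lemma kD_eq_arctanh_norm_mobius (z w : ℂ) : kD z w = arctanh ‖mobius z w‖ := rfl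

lemma mobius_zero_right (a : ℂ) : mobius a 0 = a := by
  simp [mobius]

lemma mobius_self (a : ℂ) : mobius a a = 0 := by
  simp [mobius]

lemma one_sub_conj_mul_ne_zero {a z : ℂ} (ha : ‖a‖ < 1) (hz : ‖z‖ ≤ 1) :
    1 - conj a * z ≠ 0 := by
  intro h
  have hlt : ‖conj a * z‖ < 1 := by
    rw [norm_mul, Complex.norm_conj]
    nlinarith [norm_nonneg a, norm_nonneg z]
  rw [← sub_eq_zero.mp h, norm_one] at hlt
  exact lt_irrefl 1 hlt

lemma sq_norm_one_sub_conj_mul_sub_sq_norm_sub (a z : ℂ) :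
    ‖1 - conj a * z‖ ^ 2 - ‖a - z‖ ^ 2 = (1 - ‖a‖ ^ 2) * (1 - ‖z‖ ^ 2) := by
  simp only [← Complex.normSq_eq_norm_sq, Complex.normSq_apply, Complex.sub_re, Complex.sub_im,
    Complex.mul_re, Complex.mul_im, Complex.conj_re, Complex.conj_im, Complex.one_re,
    Complex.one_im]
  ring

lemma one_sub_sq_norm_mobius {a z : ℂ} (ha : ‖a‖ < 1) (hz : ‖z‖ ≤ 1) :
    1 - ‖mobius a z‖ ^ 2 = (1 - ‖a‖ ^ 2) * (1 - ‖z‖ ^ 2) / ‖1 - conj a * z‖ ^ 2 := by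
  have hD : ‖1 - conj a * z‖ ≠ 0 := norm_ne_zero_iff.2 (one_sub_conj_mul_ne_zero ha hz)
  rw [mobius, norm_div, div_pow, ← sq_norm_one_sub_conj_mul_sub_sq_norm_sub, sub_div,
    div_self (pow_ne_zero 2 hD)]

lemma norm_mobius_lt_one {a z : ℂ} (ha : ‖a‖ < 1) (hz : ‖z‖ < 1) : ‖mobius a z‖ < 1 := by
  have hpos : 0 < 1 - ‖mobius a z‖ ^ 2 := by
    rw [one_sub_sq_norm_mobius ha hz.le]
    have ha' : 0 < 1 - ‖a‖ ^ 2 := by nlinarith [norm_nonneg a]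
    have hz' : 0 < 1 - ‖z‖ ^ 2 := by nlinarith [norm_nonneg z]
    have hD := norm_pos_iff.2 (one_sub_conj_mul_ne_zero ha hz.le)
    positivity
  nlinarith [norm_nonneg (mobius a z)]

lemma mobius_mobius {a z : ℂ} (ha : ‖a‖ < 1) (hz : ‖z‖ < 1) : mobius a (mobius a z) = z := by
  have hD := one_sub_conj_mul_ne_zero ha hz.le
  have haa : 1 - conj a * a ≠ 0 := one_sub_conj_mul_ne_zero ha ha.le
  unfold mobius
  have hden : 1 - conj a * ((a - z) / (1 - conj a * z)) = (1 - conj a * a) / (1 - conj a * z) := by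
    field_simp
    ring
  rw [hden, div_eq_iff (div_ne_zero haa hD), mul_div_assoc', eq_div_iff hD, sub_mul,
    div_mul_cancel₀ _ hD]
  ring

lemma differentiableOn_mobius {a : ℂ} (ha : ‖a‖ < 1) :
    DifferentiableOn ℂ (mobius a) (ball 0 1) :=
  ((differentiableOn_const a).sub differentiableOn_id).div
    ((differentiableOn_const 1).sub ((differentiableOn_const _).mul differentiableOn_id))
    fun _ hz => one_sub_conj_mul_ne_zero ha (mem_ball_zero_iff.1 hz).le

lemma mapsTo_mobius {a : ℂ} (ha : ‖a‖ < 1) : MapsTo (mobius a) (ball 0 1) (ball 0 1) :=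
  fun _ hz => mem_ball_zero_iff.2 (norm_mobius_lt_one ha (mem_ball_zero_iff.1 hz))

theorem norm_mobius_apply_le {f : ℂ → ℂ} (hd : DifferentiableOn ℂ f (ball 0 1))
    (hf : MapsTo f (ball 0 1) (ball 0 1)) {z w : ℂ} (hz : ‖z‖ < 1) (hw : ‖w‖ < 1) :
    ‖mobius (f z) (f w)‖ ≤ ‖mobius z w‖ := by
  have hfz : ‖f z‖ < 1 := mem_ball_zero_iff.1 (hf (mem_ball_zero_iff.2 hz))
  set g := mobius (f z) ∘ f ∘ mobius z
  have hg : DifferentiableOn ℂ g (ball 0 1) :=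
    (differentiableOn_mobius hfz).comp (hd.comp (differentiableOn_mobius hz) (mapsTo_mobius hz))
      (hf.comp (mapsTo_mobius hz))
  have hg_maps : MapsTo g (ball 0 1) (ball 0 1) :=
    (mapsTo_mobius hfz).comp (hf.comp (mapsTo_mobius hz))
  have hg0 : g 0 = 0 := by simp [g, mobius_zero_right, mobius_self]
  have := Complex.norm_le_norm_of_mapsTo_ball hg (hg_maps.mono_right ball_subset_closedBall) hg0
    (norm_mobius_lt_one hz hw)
  simpa [g, mobius_mobius hz hw] using this

lemma norm_one_sub_conj_mul_of_norm_eq_one {τ : ℂ} (hτ : ‖τ‖ = 1) (a : ℂ) :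
    ‖1 - conj a * τ‖ = ‖τ - a‖ := by
  have h : 1 - conj a * τ = conj (τ - a) * τ := by
    rw [map_sub, sub_mul, Complex.conj_mul', hτ]
    push_cast
    ring
  rw [h, norm_mul, Complex.norm_conj, hτ, mul_one]

lemma poissonKernel_zero_eq {τ : ℂ} (hτ : ‖τ‖ = 1) (a : ℂ) :
    poissonKernel 0 a τ = (1 - ‖a‖ ^ 2) / ‖τ - a‖ ^ 2 := by
  simp [poissonKernel, hτ]

/-- Julia's lemma. The hypothesis `hfreq` stands in for the usual bound `≤ 1` on the boundary
dilation coefficient at `τ`. -/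
theorem poissonKernel_le_poissonKernel_apply {f : ℂ → ℂ} (hd : DifferentiableOn ℂ f (ball 0 1))
    (hf : MapsTo f (ball 0 1) (ball 0 1)) {τ : ℂ} (hτ : ‖τ‖ = 1) {u : ℕ → ℂ}
    (hu : ∀ n, ‖u n‖ < 1) (hu_lim : Tendsto u atTop (𝓝 τ))
    (hfu_lim : Tendsto (fun n => f (u n)) atTop (𝓝 τ))
    (hfreq : ∃ᶠ n in atTop, ‖u n‖ ≤ ‖f (u n)‖) {z : ℂ} (hz : ‖z‖ < 1) :
    poissonKernel 0 z τ ≤ poissonKernel 0 (f z) τ := by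
  have hmaps : ∀ {w : ℂ}, ‖w‖ < 1 → ‖f w‖ < 1 := fun hw =>
    mem_ball_zero_iff.1 (hf (mem_ball_zero_iff.2 hw))
  set g : ℂ → ℂ → ℝ := fun a v => (1 - ‖a‖ ^ 2) / ‖1 - conj a * v‖ ^ 2
  have hg_lim : ∀ {a : ℂ}, ‖a‖ < 1 → ∀ {v : ℕ → ℂ}, Tendsto v atTop (𝓝 τ) →
      Tendsto (fun n => g a (v n)) atTop (𝓝 (poissonKernel 0 a τ)) := by
    intro a ha v hv
    rw [poissonKernel_zero_eq hτ, ← norm_one_sub_conj_mul_of_norm_eq_one hτ]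
    exact tendsto_const_nhds.div ((tendsto_const_nhds.sub (tendsto_const_nhds.mul hv)).norm.pow 2)
      (pow_ne_zero 2 (norm_ne_zero_iff.2 (one_sub_conj_mul_ne_zero ha hτ.le)))
  have hstep : ∀ n, ‖u n‖ ≤ ‖f (u n)‖ → g z (u n) ≤ g (f z) (f (u n)) := by
    intro n hn
    have hpick := norm_mobius_apply_le hd hf hz (hu n)
    have hsq : 1 - ‖mobius z (u n)‖ ^ 2 ≤ 1 - ‖mobius (f z) (f (u n))‖ ^ 2 := by
      gcongr
    rw [one_sub_sq_norm_mobius hz (hu n).le,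
      one_sub_sq_norm_mobius (hmaps hz) (hmaps (hu n)).le] at hsq
    have hun : 0 < 1 - ‖u n‖ ^ 2 := by nlinarith [norm_nonneg (u n), hu n]
    have hfz : 0 ≤ 1 - ‖f z‖ ^ 2 := by nlinarith [norm_nonneg (f z), hmaps hz]
    have hfun : 1 - ‖f (u n)‖ ^ 2 ≤ 1 - ‖u n‖ ^ 2 := by nlinarith [norm_nonneg (u n)]
    refine le_of_mul_le_mul_right ?_ hun
    calc g z (u n) * (1 - ‖u n‖ ^ 2)
        ≤ (1 - ‖f z‖ ^ 2) * (1 - ‖f (u n)‖ ^ 2) / ‖1 - conj (f z) * f (u n)‖ ^ 2 := by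
          simpa only [g, div_mul_eq_mul_div, mul_right_comm] using hsq
      _ ≤ g (f z) (f (u n)) * (1 - ‖u n‖ ^ 2) := by
          simp only [g, div_mul_eq_mul_div]
          gcongr
  exact isClosed_le continuous_fst continuous_snd |>.mem_of_frequently_of_tendsto
    (hfreq.mono hstep) ((hg_lim hz hu_lim).prodMk_nhds (hg_lim (hmaps hz) hfu_lim))

lemma frequently_le_succ_of_tendsto {u : ℕ → ℝ} {L : ℝ} (hu : ∀ n, u n < L)
    (hu_lim : Tendsto u atTop (𝓝 L)) : ∃ᶠ n in atTop, u n ≤ u (n + 1) := by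
  by_contra h
  obtain ⟨N, hN⟩ := eventually_atTop.1 (not_frequently.1 h)
  have hle : ∀ n ≥ N, u n ≤ u N := by
    intro n hn
    induction n, hn using Nat.le_induction with
    | base => exact le_rfl
    | succ n hn ih => exact (lt_of_not_ge (hN n hn)).le.trans ih
  exact (hu N).not_ge (le_of_tendsto hu_lim (eventually_atTop.2 ⟨N, hle⟩))

theorem IsDiscSemigroup.poissonKernel_le_poissonKernel {φ : ℝ → ℂ → ℂ} {τ : ℂ}
    (hφ : IsDiscSemigroup φ) (hτ : IsDenjoyWolff φ τ) {s : ℝ} (hs : 0 ≤ s) {z : ℂ}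
    (hz : z ∈ unitDisc) : poissonKernel 0 z τ ≤ poissonKernel 0 (φ s z) τ := by
  rcases hs.eq_or_lt with rfl | hs
  · rw [hφ.id0 z hz]
  have h0 : (0 : ℂ) ∈ unitDisc := by simp [unitDisc]
  set u : ℕ → ℂ := fun n => φ (n * s) 0
  have hu : ∀ n, u n ∈ unitDisc := fun n => hφ.mapsTo _ (by positivity) h0
  have hu_succ : ∀ n, φ s (u n) = u (n + 1) := fun n => by
    rw [← hφ.comp _ _ (by positivity) hs.le 0 h0]
    congr 1
    push_cast
    ring
  have hu_lim : Tendsto u atTop (𝓝 τ) :=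
    (hτ.2 0 h0).comp (tendsto_natCast_atTop_atTop.atTop_mul_const hs)
  have hfreq : ∃ᶠ n in atTop, ‖u n‖ ≤ ‖φ s (u n)‖ := by
    simp only [hu_succ]
    exact frequently_le_succ_of_tendsto hu (by simpa [hτ.1] using hu_lim.norm)
  rw [unitDisc_eq_ball] at hz
  have hd := hφ.holo s hs.le
  have hf := hφ.mapsTo s hs.le
  rw [unitDisc_eq_ball] at hd hf
  exact poissonKernel_le_poissonKernel_apply hd hf hτ.1 hu hu_lim
    (by simp only [hu_succ]; exact hu_lim.comp (tendsto_add_atTop_nat 1)) hfreq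
    (mem_ball_zero_iff.1 hz)

/-- `r * τ` is the foot of the hyperbolic perpendicular from `z` to the diameter through `τ`: the
equation says that `r` is a critical point of `r ↦ kD z (r * τ)`. -/
def IsGeodesicFoot (τ z : ℂ) (r : ℝ) : Prop :=
  r ∈ Ioo (-1) 1 ∧ r * (1 + ‖z‖ ^ 2) = (conj z * τ).re * (1 + r ^ 2)

lemma le_of_mul_one_add_sq_le {r s : ℝ} (hr : r ∈ Ioo (-1) 1) (hs : s ∈ Ioo (-1) 1)
    (h : r * (1 + s ^ 2) ≤ s * (1 + r ^ 2)) : r ≤ s := by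
  have hrs : 0 < 1 - r * s := by nlinarith [hr.1, hr.2, hs.1, hs.2]
  nlinarith

section Foot

variable {τ z : ℂ}

lemma abs_re_conj_mul_le (hτ : ‖τ‖ = 1) (z : ℂ) : |(conj z * τ).re| ≤ ‖z‖ := by
  simpa [hτ] using Complex.abs_re_le_norm (conj z * τ)

lemma sq_norm_one_sub_conj_mul_ofReal_mul (hτ : ‖τ‖ = 1) (z : ℂ) (r : ℝ) :
    ‖1 - conj z * (r * τ)‖ ^ 2 = 1 - 2 * r * (conj z * τ).re + r ^ 2 * ‖z‖ ^ 2 := by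
  have hτ' : τ.re * τ.re + τ.im * τ.im = 1 := by
    rw [← Complex.normSq_apply, Complex.normSq_eq_norm_sq, hτ, one_pow]
  simp only [← Complex.normSq_eq_norm_sq, Complex.normSq_apply, Complex.sub_re, Complex.sub_im,
    Complex.mul_re, Complex.mul_im, Complex.conj_re, Complex.conj_im, Complex.one_re,
    Complex.one_im, Complex.ofReal_re, Complex.ofReal_im]
  linear_combination r ^ 2 * (z.re ^ 2 + z.im ^ 2) * hτ'

lemma sq_norm_sub_of_norm_eq_one (hτ : ‖τ‖ = 1) (z : ℂ) :
    ‖τ - z‖ ^ 2 = 1 + ‖z‖ ^ 2 - 2 * (conj z * τ).re := by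
  have h := sq_norm_one_sub_conj_mul_ofReal_mul hτ z 1
  rw [Complex.ofReal_one, one_mul, norm_one_sub_conj_mul_of_norm_eq_one hτ] at h
  linear_combination h

lemma sq_norm_sub_pos (hτ : ‖τ‖ = 1) (hz : ‖z‖ < 1) : 0 < ‖τ - z‖ ^ 2 := by
  have := norm_sub_norm_le τ z
  rw [hτ] at this
  have : 0 < ‖τ - z‖ := by linarith
  positivity

lemma exists_isGeodesicFoot (hτ : ‖τ‖ = 1) (hz : ‖z‖ < 1) : ∃ r, IsGeodesicFoot τ z r := by
  set c := (conj z * τ).re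
  have hc := abs_le.1 (abs_re_conj_mul_le hτ z)
  have hcont : ContinuousOn (fun r : ℝ => c * (1 + r ^ 2) - r * (1 + ‖z‖ ^ 2)) (Icc (-1) 1) := by
    fun_prop
  obtain ⟨r, hr, hr0⟩ := intermediate_value_Ioo' (by norm_num) hcont
    (show (0 : ℝ) ∈ Ioo _ _ by constructor <;> nlinarith [norm_nonneg z])
  exact ⟨r, hr, by linarith⟩

lemma norm_ofReal_mul_lt_one (hτ : ‖τ‖ = 1) {t : ℝ} (ht : t ∈ Ioo (-1) 1) : ‖(t : ℂ) * τ‖ < 1 := by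
  rw [norm_mul, hτ, mul_one, Complex.norm_real, Real.norm_eq_abs, abs_lt]
  exact ht

lemma IsGeodesicFoot.norm_mobius_lt (hτ : ‖τ‖ = 1) (hz : ‖z‖ < 1) {r : ℝ}
    (hr : IsGeodesicFoot τ z r) {s : ℝ} (hs : s ∈ Ioo (-1) 1) (hne : s ≠ r) :
    ‖mobius z (r * τ)‖ < ‖mobius z (s * τ)‖ := by
  suffices 1 - ‖mobius z (s * τ)‖ ^ 2 < 1 - ‖mobius z (r * τ)‖ ^ 2 by
    nlinarith [norm_nonneg (mobius z (s * τ)), norm_nonneg (mobius z (r * τ))]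
  have hDpos : ∀ {t : ℝ}, t ∈ Ioo (-1) 1 → 0 < ‖1 - conj z * (t * τ)‖ ^ 2 := fun ht =>
    pow_pos (norm_pos_iff.2 (one_sub_conj_mul_ne_zero hz (norm_ofReal_mul_lt_one hτ ht).le)) 2
  have hsq : ∀ t : ℝ, ‖(t : ℂ) * τ‖ ^ 2 = t ^ 2 := fun t => by
    rw [norm_mul, hτ, mul_one, Complex.norm_real, Real.norm_eq_abs, sq_abs]
  rw [one_sub_sq_norm_mobius hz (norm_ofReal_mul_lt_one hτ hs).le,
    one_sub_sq_norm_mobius hz (norm_ofReal_mul_lt_one hτ hr.1).le,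
    div_lt_div_iff₀ (hDpos hs) (hDpos hr.1), hsq, hsq, sq_norm_one_sub_conj_mul_ofReal_mul hτ,
    sq_norm_one_sub_conj_mul_ofReal_mul hτ]
  set c := (conj z * τ).re
  set a := ‖z‖ ^ 2
  have ha : 0 < 1 - a := by nlinarith [norm_nonneg z]
  have hr2 : 0 < 1 - r ^ 2 := by nlinarith [hr.1.1, hr.1.2]
  have key : (1 + r ^ 2) * ((1 - r ^ 2) * (1 - 2 * s * c + s ^ 2 * a)
      - (1 - s ^ 2) * (1 - 2 * r * c + r ^ 2 * a)) = (1 + a) * (1 - r ^ 2) * (s - r) ^ 2 := by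
    linear_combination 2 * (s - r) * (1 + s * r) * hr.2
  have hgap : 0 < (1 - r ^ 2) * (1 - 2 * s * c + s ^ 2 * a)
      - (1 - s ^ 2) * (1 - 2 * r * c + r ^ 2 * a) := by
    have hpos : 0 < (1 + a) * (1 - r ^ 2) * (s - r) ^ 2 := by
      have : s - r ≠ 0 := sub_ne_zero.2 hne
      positivity
    rw [← key] at hpos
    exact pos_of_mul_pos_right hpos (by positivity)
  nlinarith [mul_pos ha hgap]

lemma IsGeodesicFoot.kD_lt (hτ : ‖τ‖ = 1) (hz : ‖z‖ < 1) {r : ℝ} (hr : IsGeodesicFoot τ z r)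
    {s : ℝ} (hs : s ∈ Ioo (-1) 1) (hne : s ≠ r) : kD z (r * τ) < kD z (s * τ) := by
  rw [kD_eq_arctanh_norm_mobius, kD_eq_arctanh_norm_mobius, arctanh_lt_arctanh_iff
    (norm_mem_Ioo_of_norm_lt_one (norm_mobius_lt_one hz (norm_ofReal_mul_lt_one hτ hr.1)))
    (norm_mem_Ioo_of_norm_lt_one (norm_mobius_lt_one hz (norm_ofReal_mul_lt_one hτ hs)))]
  exact hr.norm_mobius_lt hτ hz hs hne

lemma IsGeodesicFoot.nonneg (hτ : ‖τ‖ = 1) (hz : ‖z‖ < 1) {r : ℝ} (hr : IsGeodesicFoot τ z r)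
    (hP : 1 ≤ poissonKernel 0 z τ) : 0 ≤ r := by
  rw [poissonKernel_zero_eq hτ, le_div_iff₀ (sq_norm_sub_pos hτ hz), one_mul,
    sq_norm_sub_of_norm_eq_one hτ] at hP
  nlinarith [hr.2, sq_nonneg r, sq_nonneg ‖z‖]

lemma IsGeodesicFoot.le_of_poissonKernel_le (hτ : ‖τ‖ = 1) {w : ℂ} (hz : ‖z‖ < 1) (hw : ‖w‖ < 1)
    (hzw : ‖z‖ ≤ ‖w‖) (hP : poissonKernel 0 z τ ≤ poissonKernel 0 w τ) {r s : ℝ}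
    (hr : IsGeodesicFoot τ z r) (hs : IsGeodesicFoot τ w s) : r ≤ s := by
  have hQz := sq_norm_sub_pos hτ hz
  rw [poissonKernel_zero_eq hτ, poissonKernel_zero_eq hτ,
    div_le_div_iff₀ hQz (sq_norm_sub_pos hτ hw), sq_norm_sub_of_norm_eq_one hτ z,
    sq_norm_sub_of_norm_eq_one hτ w] at hP
  rw [sq_norm_sub_of_norm_eq_one hτ] at hQz
  have hab : ‖z‖ ^ 2 ≤ ‖w‖ ^ 2 := by gcongr
  obtain ⟨hr, hrz⟩ := hr
  obtain ⟨hs, hsw⟩ := hs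
  set a := ‖z‖ ^ 2
  set b := ‖w‖ ^ 2
  set c := (conj z * τ).re
  set d := (conj w * τ).re
  have ha : 0 < 1 - a := by nlinarith [norm_nonneg z]
  have hQ : (1 + b - 2 * d) * (1 + a) ≤ (1 + a - 2 * c) * (1 + b) := by
    refine le_of_mul_le_mul_left ?_ ha
    nlinarith [mul_le_mul_of_nonneg_left hP (by positivity : (0 : ℝ) ≤ 1 + a),
      mul_nonneg hQz.le (sub_nonneg.2 hab)]
  have hcd : 0 ≤ d * (1 + a) - c * (1 + b) := by linarith
  refine le_of_mul_one_add_sq_le hr hs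
    (le_of_mul_le_mul_left ?_ (by positivity : 0 < (1 + a) * (1 + b)))
  have e : (1 + a) * (1 + b) * (s * (1 + r ^ 2)) - (1 + a) * (1 + b) * (r * (1 + s ^ 2))
      = (1 + r ^ 2) * (1 + s ^ 2) * (d * (1 + a) - c * (1 + b)) := by
    linear_combination (1 + a) * (1 + r ^ 2) * hsw - (1 + b) * (1 + s ^ 2) * hrz
  nlinarith [mul_nonneg (by positivity : (0 : ℝ) ≤ (1 + r ^ 2) * (1 + s ^ 2)) hcd]

lemma IsOrthProjection.eq_ofReal_mul {τ z : ℂ} {p : ℂ → ℂ} (hp : IsOrthProjection τ p)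
    (hτ : ‖τ‖ = 1) (hz : z ∈ unitDisc) {r : ℝ} (hr : IsGeodesicFoot τ z r) : p z = r * τ := by
  obtain ⟨⟨s, hs, hpz⟩, hmin⟩ := hp z hz
  rcases eq_or_ne s r with rfl | hne
  · exact hpz
  · exact absurd (hpz ▸ hmin r hr.1) (hr.kD_lt hτ hz hs hne).not_ge

lemma kD_zero_ofReal_mul {τ : ℂ} (hτ : ‖τ‖ = 1) (r : ℝ) : kD 0 (r * τ) = arctanh |r| := by
  rw [kD_zero_left, norm_mul, hτ, mul_one, Complex.norm_real, Real.norm_eq_abs]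

end Foot

/-- **Lemma 3.2:** if the total speed does not decrease from `t₁` to `t₂`, neither does
the orthogonal speed. -/
theorem orthSpeed_le_of_totalSpeed_le
    (φ : ℝ → ℂ → ℂ) (τ : ℂ) (p : ℂ → ℂ)
    (hφ : IsNonElliptic φ) (hτ : IsDenjoyWolff φ τ) (hp : IsOrthProjection τ p)
    (t₁ t₂ : ℝ) (ht₁ : 0 ≤ t₁) (ht : t₁ ≤ t₂)
    (hv : totalSpeed φ t₁ ≤ totalSpeed φ t₂) :
    orthSpeed φ p t₁ ≤ orthSpeed φ p t₂ := by
  have h0 : (0 : ℂ) ∈ unitDisc := by simp [unitDisc]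
  have hz₁ : φ t₁ 0 ∈ unitDisc := hφ.mapsTo t₁ ht₁ h0
  have hz₂ : φ t₂ 0 ∈ unitDisc := hφ.mapsTo t₂ (ht₁.trans ht) h0
  have hflow : φ t₂ 0 = φ (t₂ - t₁) (φ t₁ 0) := by
    rw [← hφ.comp t₁ _ ht₁ (sub_nonneg.2 ht) 0 h0, sub_add_cancel]
  have hnorm : ‖φ t₁ 0‖ ≤ ‖φ t₂ 0‖ := by
    rwa [totalSpeed, totalSpeed, kD_zero_left, kD_zero_left,
      arctanh_le_arctanh_iff (norm_mem_Ioo_of_norm_lt_one hz₁)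
        (norm_mem_Ioo_of_norm_lt_one hz₂)] at hv
  have hP₁ : 1 ≤ poissonKernel 0 (φ t₁ 0) τ := by
    simpa [poissonKernel_zero_eq hτ.1, hτ.1] using
      hφ.poissonKernel_le_poissonKernel hτ ht₁ h0
  have hP₂ : poissonKernel 0 (φ t₁ 0) τ ≤ poissonKernel 0 (φ t₂ 0) τ :=
    hflow ▸ hφ.poissonKernel_le_poissonKernel hτ (sub_nonneg.2 ht) hz₁
  obtain ⟨r₁, hr₁⟩ := exists_isGeodesicFoot hτ.1 hz₁
  obtain ⟨r₂, hr₂⟩ := exists_isGeodesicFoot hτ.1 hz₂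
  have hr₁_nonneg := hr₁.nonneg hτ.1 hz₁ hP₁
  have hr₁₂ := hr₁.le_of_poissonKernel_le hτ.1 hz₁ hz₂ hnorm hP₂ hr₂
  rw [orthSpeed, orthSpeed, hp.eq_ofReal_mul hτ.1 hz₁ hr₁, hp.eq_ofReal_mul hτ.1 hz₂ hr₂,
    kD_zero_ofReal_mul hτ.1, kD_zero_ofReal_mul hτ.1, abs_of_nonneg hr₁_nonneg,
    abs_of_nonneg (hr₁_nonneg.trans hr₁₂)]
  exact (arctanh_le_arctanh_iff ⟨by linarith, hr₁.1.2⟩ ⟨by linarith, hr₂.1.2⟩).2 hr₁₂
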